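/- arXiv:2011.06510 — 2 statements merged into one kernel-verified Lean document; each statement's English description precedes it below -/
import Mathlib

section
/- Let $\sigma_1,\sigma_2\in L_p[0,1]$, $1<p<2$, $1/p+1/q=1$, $d>0$, $\mu\in\mathbb{C}$ with $|\mathrm{Im}\,\mu|\le d$, $\tilde\sigma_1(x,t)=\int_0^{x-t}\sigma_1(t+\xi)\sigma_2(\xi)\,d\xi$, $\tilde\sigma_2(x,t)=\int_0^{x-t}\sigma_2(t+\xi)\sigma_1(\xi)\,d\xi$, and $\gamma(\mu)=\sum_{j=1}^2(\|\int_0^x e^{-2i\mu t}\sigma_j(t)dt\|_{L_q}+\|\int_0^x e^{2i\mu t}\sigma_j(t)dt\|_{L_q})$. Then for all $x\in[0,1]$: $\left|\int_0^x e^{-2i\mu t}\tilde\sigma_1(x,t)\,dt\right|+\left|\int_0^x e^{2i\mu t}\tilde\sigma_2(x,t)\,dt\right|\le 2e^{2d}\max(\|\sigma_1\|_{L_p},\|\sigma_2\|_{L_p})\,\gamma(\mu)$. -/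
open MeasureTheory intervalIntegral Complex

open Set


lemma aux_finite : IsFiniteMeasure (volume.restrict (Set.Ioc (0:ℝ) 1)) :=
  ⟨by simp⟩

lemma aux_int_of_rpow (p : ℝ) (hp : 1 ≤ p) {f : ℝ → ℂ} (hmf : Measurable f)
    (h : IntegrableOn (fun t => ‖f t‖ ^ p) (Set.Ioc (0:ℝ) 1) volume) :
    IntegrableOn f (Set.Ioc (0:ℝ) 1) volume := by
  haveI := aux_finite
  refine Integrable.mono' (g := fun t => ‖f t‖ ^ p + 1) (h.add (integrable_const 1))
    hmf.aestronglyMeasurable ?_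
  filter_upwards with t
  rcases le_or_gt (‖f t‖) 1 with ht | ht
  · have : (0:ℝ) ≤ ‖f t‖ ^ p := Real.rpow_nonneg (norm_nonneg _) _
    calc ‖f t‖ ≤ 1 := ht
    _ ≤ ‖f t‖ ^ p + 1 := by linarith
  · have h2 : ‖f t‖ ^ (1:ℝ) ≤ ‖f t‖ ^ p := Real.rpow_le_rpow_of_exponent_le ht.le hp
    rw [Real.rpow_one] at h2
    linarith

lemma aux_memLp (p : ℝ) (hp : 0 < p) {f : ℝ → ℂ} (hmf : Measurable f)
    (h : IntegrableOn (fun t => ‖f t‖ ^ p) (Set.Ioc (0:ℝ) 1) volume) :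
    MemLp f (ENNReal.ofReal p) (volume.restrict (Set.Ioc (0:ℝ) 1)) := by
  have h0 : ENNReal.ofReal p ≠ 0 := by simp [hp, ENNReal.ofReal_eq_zero, not_le]
  refine (memLp_norm_rpow_iff (q := ENNReal.ofReal p) (p := ENNReal.ofReal p)
    (μ := volume.restrict (Set.Ioc (0:ℝ) 1))
    hmf.aestronglyMeasurable h0 ENNReal.ofReal_ne_top).mp ?_
  rw [ENNReal.div_self h0 ENNReal.ofReal_ne_top, ENNReal.toReal_ofReal hp.le,
    memLp_one_iff_integrable]
  exact h


lemma aux_fubini (f g : ℝ → ℂ) (hmf : Measurable f) (hmg : Measurable g)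
    (hf1 : IntegrableOn f (Set.Ioc (0:ℝ) 1) volume)
    (hg1 : IntegrableOn g (Set.Ioc (0:ℝ) 1) volume)
    (c : ℂ) (x : ℝ) (hx0 : 0 ≤ x) (hx1 : x ≤ 1) :
    (∫ t in (0:ℝ)..x, Complex.exp (c * t) * ∫ ξ in (0:ℝ)..(x - t), f (t + ξ) * g ξ)
      = ∫ s in (0:ℝ)..x, Complex.exp (c * s) * f s *
          ∫ ξ in (0:ℝ)..s, Complex.exp (-c * ξ) * g ξ := by
  classical
  set F : ℝ × ℝ → ℂ :=
    fun z => if z.1 < z.2 then f z.2 * (Complex.exp (c * z.1) * g (z.2 - z.1)) else 0 with hFdef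
  -- measurability
  have hFm : Measurable F := by
    apply Measurable.ite (measurableSet_lt measurable_fst measurable_snd)
    · exact (hmf.comp measurable_snd).mul
        (((Complex.measurable_exp.comp (measurable_const.mul
          (Complex.measurable_ofReal.comp measurable_fst)))).mul
          (hmg.comp (measurable_snd.sub measurable_fst)))
    · exact measurable_const
  -- set identities
  have hiIoo : ∀ s : ℝ, 0 < s → s ≤ x → Set.Ioc 0 x ∩ Set.Iio s = Set.Ioo 0 s := by
    intro s hs0 hsx
    ext t
    simp only [Set.mem_inter_iff, Set.mem_Ioc, Set.mem_Iio, Set.mem_Ioo]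
    constructor
    · rintro ⟨⟨h1, h2⟩, h3⟩; exact ⟨h1, h3⟩
    · rintro ⟨h1, h2⟩; exact ⟨⟨h1, le_trans h2.le hsx⟩, h2⟩
  have hiIoc : ∀ t : ℝ, 0 < t → Set.Ioc 0 x ∩ Set.Ioi t = Set.Ioc t x := by
    intro t ht
    ext u
    simp only [Set.mem_inter_iff, Set.mem_Ioc, Set.mem_Ioi]
    constructor
    · rintro ⟨⟨h1, h2⟩, h3⟩; exact ⟨h3, h2⟩
    · rintro ⟨h1, h2⟩; exact ⟨⟨ht.trans h1, h2⟩, h1⟩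
  -- integrability of the shifted integrand
  have hψ : ∀ s : ℝ, 0 < s → s ≤ 1 →
      IntegrableOn (fun t : ℝ => Complex.exp (c * t) * g (s - t)) (Set.Ioc 0 s) volume := by
    intro s hs0 hs1
    have h1 : IntervalIntegrable g volume 0 s :=
      (intervalIntegrable_iff_integrableOn_Ioc_of_le hs0.le).mpr
        (hg1.mono_set (Set.Ioc_subset_Ioc le_rfl hs1))
    have h2 := (h1.comp_sub_left s)
    rw [sub_zero, sub_self] at h2
    have h3 : ContinuousOn (fun t : ℝ => Complex.exp (c * t)) (Set.uIcc 0 s) :=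
      (Complex.continuous_exp.comp (continuous_const.mul Complex.continuous_ofReal)).continuousOn
    exact (intervalIntegrable_iff_integrableOn_Ioc_of_le hs0.le).mp (h2.symm.continuousOn_mul h3)
  have hψn : ∀ s : ℝ, 0 < s → s ≤ 1 →
      IntegrableOn (fun t : ℝ => ‖g (s - t)‖) (Set.Ioc 0 s) volume := by
    intro s hs0 hs1
    have h1 : IntervalIntegrable g volume 0 s :=
      (intervalIntegrable_iff_integrableOn_Ioc_of_le hs0.le).mpr
        (hg1.mono_set (Set.Ioc_subset_Ioc le_rfl hs1))
    have h2 := (h1.comp_sub_left s)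
    rw [sub_zero, sub_self] at h2
    exact ((intervalIntegrable_iff_integrableOn_Ioc_of_le hs0.le).mp h2.symm).norm
  -- bound for the exponential
  set B0 : ℝ := Real.exp |c.re| with hB0def
  have hB0 : ∀ t : ℝ, 0 ≤ t → t ≤ 1 → ‖Complex.exp (c * t)‖ ≤ B0 := by
    intro t ht0 ht1
    rw [Complex.norm_exp]
    apply Real.exp_le_exp.mpr
    have h : (c * (t:ℂ)).re = c.re * t := by simp [Complex.mul_re]
    rw [h]
    calc c.re * t ≤ |c.re| * t := by nlinarith [le_abs_self c.re]
      _ ≤ |c.re| * 1 := by nlinarith [abs_nonneg c.re]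
      _ = |c.re| := mul_one _
  set Cg : ℝ := ∫ t in Set.Ioc (0:ℝ) 1, ‖g t‖ with hCgdef
  -- product integrability
  have hFint : Integrable (Function.uncurry fun t s => F (t, s))
      ((volume.restrict (Set.Ioc 0 x)).prod (volume.restrict (Set.Ioc 0 x))) := by
    have huc : (Function.uncurry fun t s => F (t, s)) = F := rfl
    rw [huc, integrable_prod_iff' hFm.aestronglyMeasurable]
    constructor
    · filter_upwards [ae_restrict_mem measurableSet_Ioc] with s hs
      have heq : (fun t => F (t, s)) = Set.indicator (Set.Iio s)
          (fun t => f s * (Complex.exp (c * t) * g (s - t))) := by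
        funext t
        simp [hFdef, Set.indicator_apply, Set.mem_Iio]
      rw [heq, integrable_indicator_iff measurableSet_Iio, IntegrableOn,
        Measure.restrict_restrict measurableSet_Iio, Set.inter_comm, hiIoo s hs.1 hs.2]
      exact IntegrableOn.mono_set ((hψ s hs.1 (hs.2.trans hx1)).const_mul (f s)) Set.Ioo_subset_Ioc_self
    · -- integrable of s ↦ ∫ t, ‖F (t,s)‖
      have hsm : StronglyMeasurable fun s : ℝ => ∫ t, ‖F (t, s)‖ ∂(volume.restrict (Set.Ioc 0 x)) := by
        exact (hFm.norm.stronglyMeasurable).integral_prod_left'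
      refine Integrable.mono' (g := fun s => B0 * Cg * ‖f s‖)
        (((hf1.mono_set (Set.Ioc_subset_Ioc le_rfl hx1)).norm).const_mul (B0 * Cg))
        hsm.aestronglyMeasurable ?_
      filter_upwards [ae_restrict_mem measurableSet_Ioc] with s hs
      have hnn : 0 ≤ ∫ t, ‖F (t, s)‖ ∂(volume.restrict (Set.Ioc 0 x)) :=
        integral_nonneg fun t => norm_nonneg _
      rw [Real.norm_of_nonneg hnn]
      have hDint : Integrable (Set.indicator (Set.Iio s)
          (fun t => B0 * ‖f s‖ * ‖g (s - t)‖)) (volume.restrict (Set.Ioc 0 x)) := by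
        rw [integrable_indicator_iff measurableSet_Iio, IntegrableOn,
          Measure.restrict_restrict measurableSet_Iio, Set.inter_comm, hiIoo s hs.1 hs.2]
        exact IntegrableOn.mono_set ((hψn s hs.1 (hs.2.trans hx1)).const_mul (B0 * ‖f s‖))
          Set.Ioo_subset_Ioc_self
      have hle : ∫ t, ‖F (t, s)‖ ∂(volume.restrict (Set.Ioc 0 x)) ≤
          ∫ t, Set.indicator (Set.Iio s) (fun t => B0 * ‖f s‖ * ‖g (s - t)‖) t
            ∂(volume.restrict (Set.Ioc 0 x)) := by
        refine integral_mono_of_nonneg (Filter.Eventually.of_forall fun t => norm_nonneg _) hDint ?_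
        filter_upwards [ae_restrict_mem measurableSet_Ioc] with t ht
        by_cases hts : t < s
        · rw [Set.indicator_of_mem (Set.mem_Iio.mpr hts)]
          simp only [hFdef, if_pos hts, norm_mul]
          calc ‖f s‖ * (‖Complex.exp (c * t)‖ * ‖g (s - t)‖)
              ≤ ‖f s‖ * (B0 * ‖g (s - t)‖) := by
                gcongr
                exact hB0 t ht.1.le (ht.2.trans hx1)
            _ = B0 * ‖f s‖ * ‖g (s - t)‖ := by ring
        · rw [Set.indicator_of_notMem (fun h => hts (Set.mem_Iio.mp h))]
          simp [hFdef, if_neg hts]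
      refine hle.trans ?_
      rw [MeasureTheory.integral_indicator measurableSet_Iio, Measure.restrict_restrict measurableSet_Iio,
        Set.inter_comm, hiIoo s hs.1 hs.2]
      have e1 : ∫ t in Set.Ioo 0 s, B0 * ‖f s‖ * ‖g (s - t)‖ =
          B0 * ‖f s‖ * ∫ t in Set.Ioo 0 s, ‖g (s - t)‖ := integral_const_mul _ _
      rw [e1]
      have e2 : ∫ t in Set.Ioo 0 s, ‖g (s - t)‖ ≤ Cg := by
        have e3 : ∫ t in Set.Ioo 0 s, ‖g (s - t)‖ = ∫ t in (0:ℝ)..s, ‖g (s - t)‖ := by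
          rw [intervalIntegral.integral_of_le hs.1.le, integral_Ioc_eq_integral_Ioo]
        have e4 : (∫ t in (0:ℝ)..s, ‖g (s - t)‖) = ∫ u in (0:ℝ)..s, ‖g u‖ := by
          have := intervalIntegral.integral_comp_sub_left (a := 0) (b := s)
            (fun u => ‖g u‖) s
          rw [sub_zero, sub_self] at this
          rw [this]
        rw [e3, e4, intervalIntegral.integral_of_le hs.1.le, hCgdef]
        refine setIntegral_mono_set hg1.norm (Filter.Eventually.of_forall fun t => norm_nonneg _) ?_
        exact (Set.Ioc_subset_Ioc le_rfl (hs.2.trans hx1)).eventuallyLE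
      calc B0 * ‖f s‖ * ∫ t in Set.Ioo 0 s, ‖g (s - t)‖ ≤ B0 * ‖f s‖ * Cg := by
            have hB0nn : 0 ≤ B0 := Real.exp_nonneg _
            have := mul_le_mul_of_nonneg_left e2 (mul_nonneg hB0nn (norm_nonneg (f s)))
            linarith
        _ = B0 * Cg * ‖f s‖ := by ring
  -- step 1
  have step1 : ∀ t ∈ Set.Ioc (0:ℝ) x,
      Complex.exp (c * t) * (∫ ξ in (0:ℝ)..(x - t), f (t + ξ) * g ξ) =
        ∫ s, F (t, s) ∂(volume.restrict (Set.Ioc 0 x)) := by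
    intro t ht
    have e1 : (∫ ξ in (0:ℝ)..(x - t), f (t + ξ) * g ξ) = ∫ s in t..x, f s * g (s - t) := by
      have h := intervalIntegral.integral_comp_add_left (a := 0) (b := x - t)
        (fun s => f s * g (s - t)) t
      have h2 : t + (x - t) = x := by ring
      rw [add_zero, h2] at h
      rw [← h]
      apply intervalIntegral.integral_congr
      intro ξ hξ
      simp [add_sub_cancel_left]
    calc Complex.exp (c * t) * (∫ ξ in (0:ℝ)..(x - t), f (t + ξ) * g ξ)
        = ∫ s in t..x, Complex.exp (c * t) * (f s * g (s - t)) := by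
          rw [e1, ← intervalIntegral.integral_const_mul]
      _ = ∫ s in Set.Ioc t x, Complex.exp (c * t) * (f s * g (s - t)) :=
          intervalIntegral.integral_of_le ht.2
      _ = ∫ s in Set.Ioc 0 x, Set.indicator (Set.Ioi t)
            (fun s => f s * (Complex.exp (c * t) * g (s - t))) s := by
          rw [setIntegral_indicator measurableSet_Ioi, hiIoc t ht.1]
          exact (setIntegral_congr_fun measurableSet_Ioc (fun s hs => by ring)).symm
      _ = ∫ s, F (t, s) ∂(volume.restrict (Set.Ioc 0 x)) := by
          refine integral_congr_ae (Filter.Eventually.of_forall fun s => ?_)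
          simp [hFdef, Set.indicator_apply, Set.mem_Ioi]
  -- step 2
  have step2 : ∀ s ∈ Set.Ioc (0:ℝ) x,
      (∫ t, F (t, s) ∂(volume.restrict (Set.Ioc 0 x))) =
        Complex.exp (c * s) * f s * ∫ ξ in (0:ℝ)..s, Complex.exp (-c * ξ) * g ξ := by
    intro s hs
    have e0 : (fun t => F (t, s)) = Set.indicator (Set.Iio s)
        (fun t => f s * (Complex.exp (c * t) * g (s - t))) := by
      funext t
      simp [hFdef, Set.indicator_apply, Set.mem_Iio]
    calc (∫ t, F (t, s) ∂(volume.restrict (Set.Ioc 0 x)))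
        = ∫ t in Set.Ioc 0 x, Set.indicator (Set.Iio s)
            (fun t => f s * (Complex.exp (c * t) * g (s - t))) t := by rw [e0]
      _ = ∫ t in Set.Ioo 0 s, f s * (Complex.exp (c * t) * g (s - t)) := by
          rw [setIntegral_indicator measurableSet_Iio, hiIoo s hs.1 hs.2]
      _ = ∫ t in Set.Ioc 0 s, f s * (Complex.exp (c * t) * g (s - t)) :=
          integral_Ioc_eq_integral_Ioo.symm
      _ = ∫ t in (0:ℝ)..s, f s * (Complex.exp (c * t) * g (s - t)) :=
          (intervalIntegral.integral_of_le hs.1.le).symm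
      _ = f s * ∫ t in (0:ℝ)..s, Complex.exp (c * t) * g (s - t) :=
          intervalIntegral.integral_const_mul _ _
      _ = f s * ∫ ξ in (0:ℝ)..s, Complex.exp (c * (s - ξ : ℝ)) * g ξ := by
          congr 1
          have h := intervalIntegral.integral_comp_sub_left (a := 0) (b := s)
            (fun ξ => Complex.exp (c * (s - ξ : ℝ)) * g ξ) s
          rw [sub_zero, sub_self] at h
          rw [← h]
          apply intervalIntegral.integral_congr
          intro t ht'
          simp [sub_sub_cancel]
      _ = Complex.exp (c * s) * f s * ∫ ξ in (0:ℝ)..s, Complex.exp (-c * ξ) * g ξ := by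
          have e5 : (fun ξ : ℝ => Complex.exp (c * (s - ξ : ℝ)) * g ξ) =
              fun ξ : ℝ => Complex.exp (c * s) * (Complex.exp (-c * ξ) * g ξ) := by
            funext ξ
            rw [← mul_assoc, ← Complex.exp_add]
            congr 2
            push_cast
            ring
          rw [e5, intervalIntegral.integral_const_mul]
          ring
  -- assemble
  rw [intervalIntegral.integral_of_le hx0, intervalIntegral.integral_of_le hx0]
  calc ∫ t in Set.Ioc (0:ℝ) x, Complex.exp (c * t) * ∫ ξ in (0:ℝ)..(x - t), f (t + ξ) * g ξ
      = ∫ t in Set.Ioc (0:ℝ) x, ∫ s, F (t, s) ∂(volume.restrict (Set.Ioc 0 x)) :=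
        setIntegral_congr_fun measurableSet_Ioc step1
    _ = ∫ s, ∫ t, F (t, s) ∂(volume.restrict (Set.Ioc 0 x)) ∂(volume.restrict (Set.Ioc 0 x)) :=
        integral_integral_swap hFint
    _ = ∫ s in Set.Ioc (0:ℝ) x, Complex.exp (c * s) * f s *
          ∫ ξ in (0:ℝ)..s, Complex.exp (-c * ξ) * g ξ :=
        setIntegral_congr_fun measurableSet_Ioc step2

lemma aux_key (p q : ℝ) (hpq : Real.HolderConjugate p q)
    (f g : ℝ → ℂ) (hmf : Measurable f) (hmg : Measurable g)
    (hfp : IntegrableOn (fun t => ‖f t‖ ^ p) (Set.Ioc (0:ℝ) 1) volume)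
    (hgp : IntegrableOn (fun t => ‖g t‖ ^ p) (Set.Ioc (0:ℝ) 1) volume)
    (c : ℂ) (B : ℝ) (hB : ∀ s : ℝ, 0 ≤ s → s ≤ 1 → ‖Complex.exp (c * s)‖ ≤ B)
    (x : ℝ) (hx0 : 0 ≤ x) (hx1 : x ≤ 1) :
    ‖∫ t in (0:ℝ)..x, Complex.exp (c * t) * ∫ ξ in (0:ℝ)..(x - t), f (t + ξ) * g ξ‖ ≤
      B * ((∫ t in (0:ℝ)..1, ‖f t‖ ^ p) ^ (1/p) *
        (∫ x' in (0:ℝ)..1, ‖∫ ξ in (0:ℝ)..x', Complex.exp (-c * ξ) * g ξ‖ ^ q) ^ (1/q)) := by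
  haveI := aux_finite
  have hBnn : 0 ≤ B := le_trans (norm_nonneg _) (hB 0 le_rfl zero_le_one)
  have hf1 := aux_int_of_rpow p hpq.lt.le hmf hfp
  have hg1 := aux_int_of_rpow p hpq.lt.le hmg hgp
  rw [aux_fubini f g hmf hmg hf1 hg1 c x hx0 hx1]
  set G : ℝ → ℂ := fun s => ∫ ξ in (0:ℝ)..s, Complex.exp (-c * ξ) * g ξ with hGdef
  have hgI : IntervalIntegrable (fun ξ : ℝ => Complex.exp (-c * ξ) * g ξ) volume 0 1 := by
    have h1 : IntervalIntegrable g volume 0 1 :=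
      (intervalIntegrable_iff_integrableOn_Ioc_of_le zero_le_one).mpr hg1
    exact h1.continuousOn_mul
      ((Complex.continuous_exp.comp (continuous_const.mul Complex.continuous_ofReal)).continuousOn)
  have hGcont : ContinuousOn G (Set.Icc (0:ℝ) 1) := by
    have h := continuousOn_primitive_interval' hgI
      (by rw [Set.uIcc_of_le zero_le_one]; exact Set.left_mem_Icc.mpr zero_le_one)
    rwa [Set.uIcc_of_le zero_le_one] at h
  set CG : ℝ := ∫ ξ in (0:ℝ)..1, ‖Complex.exp (-c * ξ) * g ξ‖ with hCGdef
  have hGbdd : ∀ s : ℝ, 0 ≤ s → s ≤ 1 → ‖G s‖ ≤ CG := by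
    intro s hs0 hs1
    calc ‖G s‖ ≤ ∫ ξ in (0:ℝ)..s, ‖Complex.exp (-c * ξ) * g ξ‖ :=
          intervalIntegral.norm_integral_le_integral_norm hs0
      _ ≤ CG := by
          refine intervalIntegral.integral_mono_interval le_rfl hs0 hs1
            (Filter.Eventually.of_forall fun ξ => norm_nonneg _) hgI.norm
  have hGmem : MemLp G (ENNReal.ofReal q) (volume.restrict (Set.Ioc (0:ℝ) 1)) := by
    refine MemLp.of_bound ((hGcont.mono Set.Ioc_subset_Icc_self).aestronglyMeasurable
      measurableSet_Ioc) CG ?_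
    filter_upwards [ae_restrict_mem measurableSet_Ioc] with s hs
    exact hGbdd s hs.1.le hs.2
  have hfmem : MemLp f (ENNReal.ofReal p) (volume.restrict (Set.Ioc (0:ℝ) 1)) :=
    aux_memLp p hpq.pos hmf hfp
  -- integrability of ‖f‖*‖G‖ on Ioc 0 1
  have hmul : Integrable (fun s => ‖f s‖ * ‖G s‖) (volume.restrict (Set.Ioc (0:ℝ) 1)) := by
    refine Integrable.mono' (g := fun s => CG * ‖f s‖) (hf1.norm.const_mul CG)
      (hmf.norm.aestronglyMeasurable.mul
        ((hGcont.mono Set.Ioc_subset_Icc_self).aestronglyMeasurable measurableSet_Ioc).norm) ?_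
    filter_upwards [ae_restrict_mem measurableSet_Ioc] with s hs
    have h1 : 0 ≤ ‖f s‖ * ‖G s‖ := mul_nonneg (norm_nonneg _) (norm_nonneg _)
    rw [Real.norm_of_nonneg h1]
    calc ‖f s‖ * ‖G s‖ ≤ ‖f s‖ * CG :=
          mul_le_mul_of_nonneg_left (hGbdd s hs.1.le hs.2) (norm_nonneg _)
      _ = CG * ‖f s‖ := mul_comm _ _
  -- chain of bounds
  have h1 : ‖∫ s in (0:ℝ)..x, Complex.exp (c * s) * f s * G s‖ ≤
      ∫ s in Set.Ioc (0:ℝ) x, ‖Complex.exp (c * s) * f s * G s‖ := by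
    rw [intervalIntegral.integral_of_le hx0]
    exact norm_integral_le_integral_norm _
  have h2 : ∫ s in Set.Ioc (0:ℝ) x, ‖Complex.exp (c * s) * f s * G s‖ ≤
      ∫ s in Set.Ioc (0:ℝ) x, B * (‖f s‖ * ‖G s‖) := by
    refine integral_mono_of_nonneg (Filter.Eventually.of_forall fun s => norm_nonneg _)
      ((IntegrableOn.mono_set hmul (Set.Ioc_subset_Ioc le_rfl hx1)).const_mul B) ?_
    filter_upwards [ae_restrict_mem measurableSet_Ioc] with s hs
    rw [norm_mul, norm_mul]
    calc ‖Complex.exp (c * s)‖ * ‖f s‖ * ‖G s‖ ≤ B * ‖f s‖ * ‖G s‖ := by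
          gcongr
          exact hB s hs.1.le (hs.2.trans hx1)
      _ = B * (‖f s‖ * ‖G s‖) := by ring
  have h3 : ∫ s in Set.Ioc (0:ℝ) x, B * (‖f s‖ * ‖G s‖) ≤
      ∫ s in Set.Ioc (0:ℝ) 1, B * (‖f s‖ * ‖G s‖) := by
    refine setIntegral_mono_set (hmul.const_mul B) ?_
      ((Set.Ioc_subset_Ioc le_rfl hx1).eventuallyLE)
    exact Filter.Eventually.of_forall fun s =>
      mul_nonneg hBnn (mul_nonneg (norm_nonneg _) (norm_nonneg _))
  have h4 : ∫ s in Set.Ioc (0:ℝ) 1, B * (‖f s‖ * ‖G s‖) =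
      B * ∫ s in Set.Ioc (0:ℝ) 1, ‖f s‖ * ‖G s‖ := integral_const_mul _ _
  have h5 : ∫ s in Set.Ioc (0:ℝ) 1, ‖f s‖ * ‖G s‖ ≤
      (∫ s in Set.Ioc (0:ℝ) 1, ‖f s‖ ^ p) ^ (1/p) *
        (∫ s in Set.Ioc (0:ℝ) 1, ‖G s‖ ^ q) ^ (1/q) :=
    integral_mul_norm_le_Lp_mul_Lq hpq hfmem hGmem
  have h6 : (∫ t in (0:ℝ)..1, ‖f t‖ ^ p) = ∫ s in Set.Ioc (0:ℝ) 1, ‖f s‖ ^ p :=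
    intervalIntegral.integral_of_le zero_le_one
  have h7 : (∫ x' in (0:ℝ)..1, ‖G x'‖ ^ q) = ∫ s in Set.Ioc (0:ℝ) 1, ‖G s‖ ^ q :=
    intervalIntegral.integral_of_le zero_le_one
  rw [h6, h7]
  calc ‖∫ s in (0:ℝ)..x, Complex.exp (c * s) * f s * G s‖
      ≤ ∫ s in Set.Ioc (0:ℝ) 1, B * (‖f s‖ * ‖G s‖) := le_trans h1 (le_trans h2 h3)
    _ = B * ∫ s in Set.Ioc (0:ℝ) 1, ‖f s‖ * ‖G s‖ := h4
    _ ≤ B * ((∫ s in Set.Ioc (0:ℝ) 1, ‖f s‖ ^ p) ^ (1/p) *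
        (∫ s in Set.Ioc (0:ℝ) 1, ‖G s‖ ^ q) ^ (1/q)) :=
        mul_le_mul_of_nonneg_left h5 hBnn

/-- for `|Im μ| ≤ d`, `1 < p < 2`, `1/p + 1/q = 1`,
`|∫_0^x e^{-2iμt} σ̃₁(x,t) dt| + |∫_0^x e^{2iμt} σ̃₂(x,t) dt|
  ≤ 2 e^{2d} max(‖σ₁‖_{L_p}, ‖σ₂‖_{L_p}) γ(μ)`,
where `γ(μ)` is the sum of the four `L_q`-norms (in `x ∈ [0,1]`) of
`∫_0^x e^{∓2iμt} σ_j(t) dt`. -/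
theorem stmt14 (p q : ℝ) (hp1 : 1 < p) (hp2 : p < 2) (hpq : 1/p + 1/q = 1)
    (σ₁ σ₂ : ℝ → ℂ) (hm1 : Measurable σ₁) (hm2 : Measurable σ₂)
    (h1 : IntervalIntegrable (fun t => ‖σ₁ t‖ ^ p) volume 0 1)
    (h2 : IntervalIntegrable (fun t => ‖σ₂ t‖ ^ p) volume 0 1)
    (d : ℝ) (hd : 0 < d) (μ : ℂ) (hμ : |μ.im| ≤ d)
    (γ : ℝ)
    (hγ : γ =
      (∫ x in (0:ℝ)..1, ‖∫ t in (0:ℝ)..x, Complex.exp (-2 * I * μ * t) * σ₁ t‖ ^ q) ^ (1/q) +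
      (∫ x in (0:ℝ)..1, ‖∫ t in (0:ℝ)..x, Complex.exp (2 * I * μ * t) * σ₁ t‖ ^ q) ^ (1/q) +
      ((∫ x in (0:ℝ)..1, ‖∫ t in (0:ℝ)..x, Complex.exp (-2 * I * μ * t) * σ₂ t‖ ^ q) ^ (1/q) +
       (∫ x in (0:ℝ)..1, ‖∫ t in (0:ℝ)..x, Complex.exp (2 * I * μ * t) * σ₂ t‖ ^ q) ^ (1/q)))
    (x : ℝ) (hx : x ∈ Set.Icc (0:ℝ) 1) :
    ‖∫ t in (0:ℝ)..x, Complex.exp (-2 * I * μ * t) *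
        ∫ ξ in (0:ℝ)..(x - t), σ₁ (t + ξ) * σ₂ ξ‖ +
      ‖∫ t in (0:ℝ)..x, Complex.exp (2 * I * μ * t) *
        ∫ ξ in (0:ℝ)..(x - t), σ₂ (t + ξ) * σ₁ ξ‖ ≤
    2 * Real.exp (2 * d) *
      max ((∫ t in (0:ℝ)..1, ‖σ₁ t‖ ^ p) ^ (1/p))
          ((∫ t in (0:ℝ)..1, ‖σ₂ t‖ ^ p) ^ (1/p)) * γ := by
  have hpq' : Real.HolderConjugate p q := Real.holderConjugate_iff.mpr ⟨hp1, by rw [← one_div, ← one_div]; exact hpq⟩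
  have hq0 : 0 < q := hpq'.symm.pos
  have hi1 : IntegrableOn (fun t => ‖σ₁ t‖ ^ p) (Set.Ioc (0:ℝ) 1) volume :=
    (intervalIntegrable_iff_integrableOn_Ioc_of_le zero_le_one).mp h1
  have hi2 : IntegrableOn (fun t => ‖σ₂ t‖ ^ p) (Set.Ioc (0:ℝ) 1) volume :=
    (intervalIntegrable_iff_integrableOn_Ioc_of_le zero_le_one).mp h2
  set B : ℝ := Real.exp (2 * d) with hBdef
  have hBgen : ∀ c : ℂ, |c.re| ≤ 2 * d → ∀ s : ℝ, 0 ≤ s → s ≤ 1 →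
      ‖Complex.exp (c * s)‖ ≤ B := by
    intro c hc s hs0 hs1
    rw [Complex.norm_exp]
    apply Real.exp_le_exp.mpr
    have h : (c * (s:ℂ)).re = c.re * s := by simp [Complex.mul_re]
    rw [h]
    nlinarith [le_abs_self c.re, abs_nonneg c.re]
  have hre1 : ((-2 * I * μ : ℂ)).re = 2 * μ.im := by simp [Complex.mul_re, Complex.mul_im]
  have hre2 : ((2 * I * μ : ℂ)).re = -(2 * μ.im) := by simp [Complex.mul_re, Complex.mul_im]
  have habs : |(2:ℝ) * μ.im| ≤ 2 * d := by
    rw [abs_mul, show |(2:ℝ)| = 2 from by norm_num]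
    linarith [hμ]
  have hB1 : ∀ s : ℝ, 0 ≤ s → s ≤ 1 → ‖Complex.exp ((-2 * I * μ) * s)‖ ≤ B :=
    hBgen _ (by rw [hre1]; exact habs)
  have hB2 : ∀ s : ℝ, 0 ≤ s → s ≤ 1 → ‖Complex.exp ((2 * I * μ) * s)‖ ≤ B :=
    hBgen _ (by rw [hre2, abs_neg]; exact habs)
  have hk1 := aux_key p q hpq' σ₁ σ₂ hm1 hm2 hi1 hi2 (-2 * I * μ) B hB1 x hx.1 hx.2
  have hk2 := aux_key p q hpq' σ₂ σ₁ hm2 hm1 hi2 hi1 (2 * I * μ) B hB2 x hx.1 hx.2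
  have harg1 : ∀ ξ : ℝ, -(-2 * I * μ) * (ξ:ℂ) = 2 * I * μ * ξ := fun ξ => by ring
  have harg2 : ∀ ξ : ℝ, -(2 * I * μ) * (ξ:ℂ) = -2 * I * μ * ξ := fun ξ => by ring
  simp only [harg1] at hk1
  simp only [harg2] at hk2
  -- abbreviations
  set A1 : ℝ := (∫ t in (0:ℝ)..1, ‖σ₁ t‖ ^ p) ^ (1/p) with hA1
  set A2 : ℝ := (∫ t in (0:ℝ)..1, ‖σ₂ t‖ ^ p) ^ (1/p) with hA2
  set a1 : ℝ := (∫ x in (0:ℝ)..1, ‖∫ t in (0:ℝ)..x, Complex.exp (-2 * I * μ * t) * σ₁ t‖ ^ q) ^ (1/q) with ha1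
  set a2 : ℝ := (∫ x in (0:ℝ)..1, ‖∫ t in (0:ℝ)..x, Complex.exp (2 * I * μ * t) * σ₁ t‖ ^ q) ^ (1/q) with ha2
  set a3 : ℝ := (∫ x in (0:ℝ)..1, ‖∫ t in (0:ℝ)..x, Complex.exp (-2 * I * μ * t) * σ₂ t‖ ^ q) ^ (1/q) with ha3
  set a4 : ℝ := (∫ x in (0:ℝ)..1, ‖∫ t in (0:ℝ)..x, Complex.exp (2 * I * μ * t) * σ₂ t‖ ^ q) ^ (1/q) with ha4
  have hA1nn : 0 ≤ A1 := Real.rpow_nonneg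
    (intervalIntegral.integral_nonneg zero_le_one fun u _ => Real.rpow_nonneg (norm_nonneg _) _) _
  have hA2nn : 0 ≤ A2 := Real.rpow_nonneg
    (intervalIntegral.integral_nonneg zero_le_one fun u _ => Real.rpow_nonneg (norm_nonneg _) _) _
  have hann : ∀ (σ : ℝ → ℂ) (c : ℂ),
      0 ≤ (∫ x in (0:ℝ)..1, ‖∫ t in (0:ℝ)..x, Complex.exp (c * t) * σ t‖ ^ q) ^ (1/q) :=
    fun σ c => Real.rpow_nonneg
      (intervalIntegral.integral_nonneg zero_le_one fun u _ => Real.rpow_nonneg (norm_nonneg _) _) _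
  have ha1nn : 0 ≤ a1 := hann σ₁ (-2 * I * μ)
  have ha2nn : 0 ≤ a2 := hann σ₁ (2 * I * μ)
  have ha3nn : 0 ≤ a3 := hann σ₂ (-2 * I * μ)
  have ha4nn : 0 ≤ a4 := hann σ₂ (2 * I * μ)
  have hBnn : (0:ℝ) ≤ B := Real.exp_nonneg _
  set M : ℝ := max A1 A2 with hM
  have hMnn : 0 ≤ M := le_trans hA1nn (le_max_left _ _)
  have hA1M : A1 ≤ M := le_max_left _ _
  have hA2M : A2 ≤ M := le_max_right _ _
  -- hk1 : ‖T1‖ ≤ B * (A1 * a4), hk2 : ‖T2‖ ≤ B * (A2 * a1)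
  have hs1 : B * (A1 * a4) ≤ B * (M * a4) := by
    apply mul_le_mul_of_nonneg_left (mul_le_mul_of_nonneg_right hA1M ha4nn) hBnn
  have hs2 : B * (A2 * a1) ≤ B * (M * a1) := by
    apply mul_le_mul_of_nonneg_left (mul_le_mul_of_nonneg_right hA2M ha1nn) hBnn
  have hγ' : a1 + a4 ≤ γ := by rw [hγ]; linarith
  have hfin : B * (M * a4) + B * (M * a1) ≤ 2 * B * M * γ := by
    have e : B * (M * a4) + B * (M * a1) = B * M * (a1 + a4) := by ring
    rw [e]
    have h5 : B * M * (a1 + a4) ≤ B * M * γ :=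
      mul_le_mul_of_nonneg_left hγ' (mul_nonneg hBnn hMnn)
    have h6 : 0 ≤ B * M * γ := mul_nonneg (mul_nonneg hBnn hMnn)
      (le_trans (by linarith : (0:ℝ) ≤ a1 + a4) hγ')
    linarith
  calc ‖∫ t in (0:ℝ)..x, Complex.exp (-2 * I * μ * t) *
        ∫ ξ in (0:ℝ)..(x - t), σ₁ (t + ξ) * σ₂ ξ‖ +
      ‖∫ t in (0:ℝ)..x, Complex.exp (2 * I * μ * t) *
        ∫ ξ in (0:ℝ)..(x - t), σ₂ (t + ξ) * σ₁ ξ‖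
      ≤ B * (A1 * a4) + B * (A2 * a1) := add_le_add hk1 hk2
    _ ≤ B * (M * a4) + B * (M * a1) := add_le_add hs1 hs2
    _ ≤ 2 * B * M * γ := hfin
end

section
/- Let $\sigma_1,\sigma_2\in L_p[0,1]$, $1\le p<2$, $d>0$, and $\mu\in\mathbb{C}$ with $|\mathrm{Im}\,\mu|\le d$. Define $\sigma_0=|\sigma_1|+|\sigma_2|$, $\gamma_0(x,\mu)$ as the sum of the four absolute values $|\int_0^x e^{\mp2i\mu t}\sigma_j(t)dt|$, and $\gamma_1(\mu)=\int_0^1\sigma_0(s)\gamma_0(s,\mu)^2\,ds$. Then $\left\|\int_0^x e^{2i\mu y}\left(\int_y^x J(z)e^{-2i\mu z}dz\right)\left(\int_0^y J^T(\tau)e^{-2i\mu\tau}d\tau\right)J^T(y)\,dy\right\|\le e^{2d}\left(\gamma_1(\mu)+\gamma_0(x,\mu)\int_0^x\sigma_0(y)\gamma_0(y,\mu)\,dy\right)$ for all $x\in[0,1]$, where $J(x)=\begin{pmatrix}0&\sigma_1(x)\\\sigma_2(x)&0\end{pmatrix}$ and the matrix norm is the sum of absolute values of entries. -/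
open MeasureTheory intervalIntegral Complex Matrix

private lemma exp_bound_pos (μ : ℂ) (d : ℝ) (hμ : |μ.im| ≤ d) (t : ℝ)
    (ht : t ∈ Set.Icc (0:ℝ) 1) :
    ‖Complex.exp (2 * I * μ * t)‖ ≤ Real.exp (2*d) := by
  rw [Complex.norm_exp, Real.exp_le_exp]
  have h : ((2:ℂ) * I * μ * (t:ℂ)).re = -2 * μ.im * t := by
    simp [Complex.mul_re, Complex.mul_im]
  obtain ⟨h1, h2⟩ := abs_le.mp hμ
  obtain ⟨ht1, ht2⟩ := ht
  rw [h]; nlinarith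

private lemma exp_bound_neg (μ : ℂ) (d : ℝ) (hμ : |μ.im| ≤ d) (t : ℝ)
    (ht : t ∈ Set.Icc (0:ℝ) 1) :
    ‖Complex.exp (-2 * I * μ * t)‖ ≤ Real.exp (2*d) := by
  rw [Complex.norm_exp, Real.exp_le_exp]
  have h : ((-2:ℂ) * I * μ * (t:ℂ)).re = 2 * μ.im * t := by
    simp [Complex.mul_re, Complex.mul_im]
  obtain ⟨h1, h2⟩ := abs_le.mp hμ
  obtain ⟨ht1, ht2⟩ := ht
  rw [h]; nlinarith

private lemma norm_int (p : ℝ) (hp1 : 1 ≤ p) (σ : ℝ → ℂ) (hm : Measurable σ)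
    (h : IntervalIntegrable (fun t => ‖σ t‖ ^ p) volume 0 1) :
    IntervalIntegrable (fun t => ‖σ t‖) volume 0 1 := by
  have hb : IntervalIntegrable (fun t => 1 + ‖σ t‖ ^ p) volume 0 1 :=
    (_root_.intervalIntegrable_const).add h
  refine hb.mono_fun (hm.norm.aestronglyMeasurable.restrict) ?_
  refine Filter.Eventually.of_forall (fun t => ?_)
  have h0 : (0:ℝ) ≤ ‖σ t‖ ^ p := Real.rpow_nonneg (norm_nonneg _) p
  simp only [Real.norm_eq_abs, _root_.abs_of_nonneg (norm_nonneg (σ t)),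
    _root_.abs_of_nonneg (by linarith : (0:ℝ) ≤ 1 + ‖σ t‖ ^ p)]
  rcases le_total (‖σ t‖) 1 with h' | h'
  · linarith
  · have h2 := Real.rpow_le_rpow_of_exponent_le h' hp1
    rw [Real.rpow_one] at h2
    linarith

private lemma exp_mul_int (σ : ℝ → ℂ) (hm : Measurable σ)
    (hσ : IntervalIntegrable (fun t => ‖σ t‖) volume 0 1)
    (e : ℝ → ℂ) (he : Continuous e) (C : ℝ)
    (hbe : ∀ t ∈ Set.Icc (0:ℝ) 1, ‖e t‖ ≤ C) :
    IntervalIntegrable (fun t => e t * σ t) volume 0 1 := by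
  have hg : IntervalIntegrable (fun t => C * ‖σ t‖) volume 0 1 := hσ.const_mul _
  refine hg.mono_fun ((he.measurable.mul hm).aestronglyMeasurable.restrict) ?_
  rw [Filter.EventuallyLE, ae_restrict_iff' measurableSet_uIoc]
  refine Filter.Eventually.of_forall fun t ht => ?_
  have ht' : t ∈ Set.Icc (0:ℝ) 1 := by
    rw [Set.uIoc_of_le (by norm_num : (0:ℝ) ≤ 1)] at ht
    exact ⟨ht.1.le, ht.2⟩
  have hC : 0 ≤ C := le_trans (norm_nonneg _) (hbe t ht')
  calc ‖e t * σ t‖ = ‖e t‖ * ‖σ t‖ := norm_mul _ _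
    _ ≤ C * ‖σ t‖ := mul_le_mul_of_nonneg_right (hbe t ht') (norm_nonneg _)
    _ ≤ ‖C * ‖σ t‖‖ := by rw [Real.norm_eq_abs]; exact le_abs_self _

/-- the key estimate for the second iterate:
`‖∫_0^x e^{2iμy} (∫_y^x J(z)e^{-2iμz}dz)(∫_0^y Jᵀ(τ)e^{-2iμτ}dτ) Jᵀ(y) dy‖
  ≤ e^{2d} (γ₁(μ) + γ₀(x,μ) ∫_0^x σ₀(y) γ₀(y,μ) dy)`,
with the sum-of-entries matrix norm, `σ₀ = |σ₁| + |σ₂|`, and `γ₀, γ₁` as in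
the paper. -/
theorem stmt17 (p : ℝ) (hp1 : 1 ≤ p) (hp2 : p < 2)
    (σ₁ σ₂ : ℝ → ℂ) (hm1 : Measurable σ₁) (hm2 : Measurable σ₂)
    (h1 : IntervalIntegrable (fun t => ‖σ₁ t‖ ^ p) volume 0 1)
    (h2 : IntervalIntegrable (fun t => ‖σ₂ t‖ ^ p) volume 0 1)
    (d : ℝ) (hd : 0 < d) (μ : ℂ) (hμ : |μ.im| ≤ d)
    (J : ℝ → Matrix (Fin 2) (Fin 2) ℂ)
    (hJ : ∀ y, J y = !![0, σ₁ y; σ₂ y, 0])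
    (σ₀ : ℝ → ℝ) (hσ₀ : ∀ y, σ₀ y = ‖σ₁ y‖ + ‖σ₂ y‖)
    (γ₀ : ℝ → ℝ)
    (hγ₀ : ∀ y, γ₀ y =
      ‖∫ t in (0:ℝ)..y, Complex.exp (-2 * I * μ * t) * σ₁ t‖ +
      ‖∫ t in (0:ℝ)..y, Complex.exp (2 * I * μ * t) * σ₁ t‖ +
      (‖∫ t in (0:ℝ)..y, Complex.exp (-2 * I * μ * t) * σ₂ t‖ +
       ‖∫ t in (0:ℝ)..y, Complex.exp (2 * I * μ * t) * σ₂ t‖))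
    (γ₁ : ℝ) (hγ₁ : γ₁ = ∫ s in (0:ℝ)..1, σ₀ s * (γ₀ s) ^ 2)
    (x : ℝ) (hx : x ∈ Set.Icc (0:ℝ) 1) :
    (∑ i : Fin 2, ∑ j : Fin 2,
      ‖∫ y in (0:ℝ)..x, Complex.exp (2 * I * μ * y) *
        ∑ l : Fin 2, (∑ k : Fin 2,
          (∫ z in y..x, Complex.exp (-2 * I * μ * z) * J z i k) *
          (∫ τ in (0:ℝ)..y, Complex.exp (-2 * I * μ * τ) * (J τ)ᵀ k l)) *
          (J y)ᵀ l j‖) ≤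
    Real.exp (2 * d) * (γ₁ + γ₀ x * ∫ y in (0:ℝ)..x, σ₀ y * γ₀ y) := by
  have hx' := hx
  obtain ⟨hx0, hx1⟩ := hx
  have hIcc : Set.uIcc (0:ℝ) 1 = Set.Icc 0 1 := Set.uIcc_of_le (by norm_num)
  have hn1 := norm_int p hp1 σ₁ hm1 h1
  have hn2 := norm_int p hp1 σ₂ hm2 h2
  have hcm : Continuous fun t : ℝ => Complex.exp (-2 * I * μ * t) :=
    Complex.continuous_exp.comp (continuous_const.mul Complex.continuous_ofReal)
  have hcp : Continuous fun t : ℝ => Complex.exp (2 * I * μ * t) :=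
    Complex.continuous_exp.comp (continuous_const.mul Complex.continuous_ofReal)
  have hg1 : IntervalIntegrable (fun t => Complex.exp (-2*I*μ*t) * σ₁ t) volume 0 1 :=
    exp_mul_int σ₁ hm1 hn1 _ hcm _ (fun t ht => exp_bound_neg μ d hμ t ht)
  have hg1p : IntervalIntegrable (fun t => Complex.exp (2*I*μ*t) * σ₁ t) volume 0 1 :=
    exp_mul_int σ₁ hm1 hn1 _ hcp _ (fun t ht => exp_bound_pos μ d hμ t ht)
  have hg2 : IntervalIntegrable (fun t => Complex.exp (-2*I*μ*t) * σ₂ t) volume 0 1 :=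
    exp_mul_int σ₂ hm2 hn2 _ hcm _ (fun t ht => exp_bound_neg μ d hμ t ht)
  have hg2p : IntervalIntegrable (fun t => Complex.exp (2*I*μ*t) * σ₂ t) volume 0 1 :=
    exp_mul_int σ₂ hm2 hn2 _ hcp _ (fun t ht => exp_bound_pos μ d hμ t ht)
  have hmono : ∀ y ∈ Set.Icc (0:ℝ) 1, Set.uIcc (0:ℝ) y ⊆ Set.uIcc (0:ℝ) 1 := fun y hy => by
    rw [Set.uIcc_of_le hy.1, hIcc]; exact Set.Icc_subset_Icc le_rfl hy.2
  have hmem : (0:ℝ) ∈ Set.uIcc (0:ℝ) 1 := Set.left_mem_uIcc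
  have hF1 : ContinuousOn (fun y => ∫ t in (0:ℝ)..y, Complex.exp (-2*I*μ*t) * σ₁ t)
      (Set.Icc 0 1) := by
    have := continuousOn_primitive_interval' hg1 hmem; rwa [hIcc] at this
  have hF1p : ContinuousOn (fun y => ∫ t in (0:ℝ)..y, Complex.exp (2*I*μ*t) * σ₁ t)
      (Set.Icc 0 1) := by
    have := continuousOn_primitive_interval' hg1p hmem; rwa [hIcc] at this
  have hF2 : ContinuousOn (fun y => ∫ t in (0:ℝ)..y, Complex.exp (-2*I*μ*t) * σ₂ t)
      (Set.Icc 0 1) := by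
    have := continuousOn_primitive_interval' hg2 hmem; rwa [hIcc] at this
  have hF2p : ContinuousOn (fun y => ∫ t in (0:ℝ)..y, Complex.exp (2*I*μ*t) * σ₂ t)
      (Set.Icc 0 1) := by
    have := continuousOn_primitive_interval' hg2p hmem; rwa [hIcc] at this
  have hγc : ContinuousOn γ₀ (Set.Icc 0 1) := by
    have he : γ₀ = fun y =>
      ‖∫ t in (0:ℝ)..y, Complex.exp (-2 * I * μ * t) * σ₁ t‖ +
      ‖∫ t in (0:ℝ)..y, Complex.exp (2 * I * μ * t) * σ₁ t‖ +
      (‖∫ t in (0:ℝ)..y, Complex.exp (-2 * I * μ * t) * σ₂ t‖ +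
       ‖∫ t in (0:ℝ)..y, Complex.exp (2 * I * μ * t) * σ₂ t‖) := funext hγ₀
    rw [he]
    exact (hF1.norm.add hF1p.norm).add (hF2.norm.add hF2p.norm)
  have hγnn : ∀ y, 0 ≤ γ₀ y := fun y => by rw [hγ₀ y]; positivity
  have hσnn : ∀ y, 0 ≤ σ₀ y := fun y => by rw [hσ₀ y]; positivity
  have hσI : IntervalIntegrable σ₀ volume 0 1 := by
    have he : σ₀ = fun y => ‖σ₁ y‖ + ‖σ₂ y‖ := funext hσ₀
    rw [he]; exact hn1.add hn2
  have hb1 : ∀ y, ‖∫ t in (0:ℝ)..y, Complex.exp (-2 * I * μ * t) * σ₁ t‖ ≤ γ₀ y := fun y => by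
    rw [hγ₀ y]
    linarith [norm_nonneg (∫ t in (0:ℝ)..y, Complex.exp (2*I*μ*t) * σ₁ t),
      norm_nonneg (∫ t in (0:ℝ)..y, Complex.exp (-2*I*μ*t) * σ₂ t),
      norm_nonneg (∫ t in (0:ℝ)..y, Complex.exp (2*I*μ*t) * σ₂ t)]
  have hb2 : ∀ y, ‖∫ t in (0:ℝ)..y, Complex.exp (-2 * I * μ * t) * σ₂ t‖ ≤ γ₀ y := fun y => by
    rw [hγ₀ y]
    linarith [norm_nonneg (∫ t in (0:ℝ)..y, Complex.exp (2*I*μ*t) * σ₁ t),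
      norm_nonneg (∫ t in (0:ℝ)..y, Complex.exp (-2*I*μ*t) * σ₁ t),
      norm_nonneg (∫ t in (0:ℝ)..y, Complex.exp (2*I*μ*t) * σ₂ t)]
  have hQ : ContinuousOn (fun y => Real.exp (2*d) * ((γ₀ x + γ₀ y) * γ₀ y)) (Set.uIcc 0 x) := by
    have h0 : Set.uIcc (0:ℝ) x ⊆ Set.Icc 0 1 := by
      rw [Set.uIcc_of_le hx0]; exact Set.Icc_subset_Icc le_rfl hx1
    have hγ' := hγc.mono h0
    exact continuousOn_const.mul ((continuousOn_const.add hγ').mul hγ')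
  have hG1 : IntervalIntegrable
      (fun y => Real.exp (2*d) * ((γ₀ x + γ₀ y) * γ₀ y) * ‖σ₂ y‖) volume 0 x :=
    (hn2.mono_set (hmono x hx')).continuousOn_mul hQ
  have hG2 : IntervalIntegrable
      (fun y => Real.exp (2*d) * ((γ₀ x + γ₀ y) * γ₀ y) * ‖σ₁ y‖) volume 0 x :=
    (hn1.mono_set (hmono x hx')).continuousOn_mul hQ
  have hG1nn : ∀ u, (0:ℝ) ≤ Real.exp (2*d) * ((γ₀ x + γ₀ u) * γ₀ u) * ‖σ₂ u‖ := fun u =>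
    mul_nonneg (mul_nonneg (Real.exp_nonneg _)
      (mul_nonneg (by linarith [hγnn x, hγnn u]) (hγnn u))) (norm_nonneg _)
  have hG2nn : ∀ u, (0:ℝ) ≤ Real.exp (2*d) * ((γ₀ x + γ₀ u) * γ₀ u) * ‖σ₁ u‖ := fun u =>
    mul_nonneg (mul_nonneg (Real.exp_nonneg _)
      (mul_nonneg (by linarith [hγnn x, hγnn u]) (hγnn u))) (norm_nonneg _)
  have hσγ2 : IntervalIntegrable (fun y => σ₀ y * γ₀ y ^ 2) volume 0 1 :=
    hσI.mul_continuousOn (by rw [hIcc]; exact hγc.pow 2)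
  have hσγ : IntervalIntegrable (fun y => σ₀ y * γ₀ y) volume 0 1 :=
    hσI.mul_continuousOn (by rw [hIcc]; exact hγc)
  have hA1 : IntervalIntegrable (fun y => Real.exp (2*d) * (σ₀ y * γ₀ y ^ 2)) volume 0 x :=
    (hσγ2.mono_set (hmono x hx')).const_mul _
  have hA2 : IntervalIntegrable (fun y => Real.exp (2*d) * (γ₀ x * (σ₀ y * γ₀ y))) volume 0 x :=
    ((hσγ.mono_set (hmono x hx')).const_mul (γ₀ x)).const_mul _
  have bound1 : ‖∫ y in (0:ℝ)..x, Complex.exp (2 * I * μ * y) *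
        ((∫ z in y..x, Complex.exp (-2 * I * μ * z) * σ₁ z) *
         (∫ τ in (0:ℝ)..y, Complex.exp (-2 * I * μ * τ) * σ₁ τ)) * σ₂ y‖ ≤
      ∫ y in (0:ℝ)..x, Real.exp (2*d) * ((γ₀ x + γ₀ y) * γ₀ y) * ‖σ₂ y‖ := by
    refine le_trans (intervalIntegral.norm_integral_le_abs_of_norm_le ?_ hG1) ?_
    · rw [ae_restrict_iff' measurableSet_uIoc]
      refine Filter.Eventually.of_forall fun y hy => ?_
      rw [Set.uIoc_of_le hx0] at hy
      have hy01 : y ∈ Set.Icc (0:ℝ) 1 := ⟨hy.1.le, hy.2.trans hx1⟩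
      have hsub : (∫ z in (0:ℝ)..x, Complex.exp (-2*I*μ*z) * σ₁ z)
          - (∫ z in (0:ℝ)..y, Complex.exp (-2*I*μ*z) * σ₁ z)
          = ∫ z in y..x, Complex.exp (-2*I*μ*z) * σ₁ z :=
        integral_interval_sub_left (hg1.mono_set (hmono x hx')) (hg1.mono_set (hmono y hy01))
      have hP : ‖∫ z in y..x, Complex.exp (-2*I*μ*z) * σ₁ z‖ ≤ γ₀ x + γ₀ y := by
        rw [← hsub]
        exact (norm_sub_le _ _).trans (add_le_add (hb1 x) (hb1 y))
      rw [norm_mul, norm_mul, norm_mul]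
      exact mul_le_mul_of_nonneg_right
        (mul_le_mul (exp_bound_pos μ d hμ y hy01)
          (mul_le_mul hP (hb1 y) (norm_nonneg _) (by linarith [hγnn x, hγnn y]))
          (mul_nonneg (norm_nonneg _) (norm_nonneg _)) (Real.exp_nonneg _))
        (norm_nonneg _)
    · exact le_of_eq (_root_.abs_of_nonneg
        (intervalIntegral.integral_nonneg hx0 (fun u _ => hG1nn u)))
  have bound2 : ‖∫ y in (0:ℝ)..x, Complex.exp (2 * I * μ * y) *
        ((∫ z in y..x, Complex.exp (-2 * I * μ * z) * σ₂ z) *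
         (∫ τ in (0:ℝ)..y, Complex.exp (-2 * I * μ * τ) * σ₂ τ)) * σ₁ y‖ ≤
      ∫ y in (0:ℝ)..x, Real.exp (2*d) * ((γ₀ x + γ₀ y) * γ₀ y) * ‖σ₁ y‖ := by
    refine le_trans (intervalIntegral.norm_integral_le_abs_of_norm_le ?_ hG2) ?_
    · rw [ae_restrict_iff' measurableSet_uIoc]
      refine Filter.Eventually.of_forall fun y hy => ?_
      rw [Set.uIoc_of_le hx0] at hy
      have hy01 : y ∈ Set.Icc (0:ℝ) 1 := ⟨hy.1.le, hy.2.trans hx1⟩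
      have hsub : (∫ z in (0:ℝ)..x, Complex.exp (-2*I*μ*z) * σ₂ z)
          - (∫ z in (0:ℝ)..y, Complex.exp (-2*I*μ*z) * σ₂ z)
          = ∫ z in y..x, Complex.exp (-2*I*μ*z) * σ₂ z :=
        integral_interval_sub_left (hg2.mono_set (hmono x hx')) (hg2.mono_set (hmono y hy01))
      have hP : ‖∫ z in y..x, Complex.exp (-2*I*μ*z) * σ₂ z‖ ≤ γ₀ x + γ₀ y := by
        rw [← hsub]
        exact (norm_sub_le _ _).trans (add_le_add (hb2 x) (hb2 y))
      rw [norm_mul, norm_mul, norm_mul]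
      exact mul_le_mul_of_nonneg_right
        (mul_le_mul (exp_bound_pos μ d hμ y hy01)
          (mul_le_mul hP (hb2 y) (norm_nonneg _) (by linarith [hγnn x, hγnn y]))
          (mul_nonneg (norm_nonneg _) (norm_nonneg _)) (Real.exp_nonneg _))
        (norm_nonneg _)
    · exact le_of_eq (_root_.abs_of_nonneg
        (intervalIntegral.integral_nonneg hx0 (fun u _ => hG2nn u)))
  calc (∑ i : Fin 2, ∑ j : Fin 2,
      ‖∫ y in (0:ℝ)..x, Complex.exp (2 * I * μ * y) *
        ∑ l : Fin 2, (∑ k : Fin 2,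
          (∫ z in y..x, Complex.exp (-2 * I * μ * z) * J z i k) *
          (∫ τ in (0:ℝ)..y, Complex.exp (-2 * I * μ * τ) * (J τ)ᵀ k l)) *
          (J y)ᵀ l j‖)
      = ‖∫ y in (0:ℝ)..x, Complex.exp (2 * I * μ * y) *
          ((∫ z in y..x, Complex.exp (-2 * I * μ * z) * σ₁ z) *
           (∫ τ in (0:ℝ)..y, Complex.exp (-2 * I * μ * τ) * σ₁ τ)) * σ₂ y‖
        + ‖∫ y in (0:ℝ)..x, Complex.exp (2 * I * μ * y) *
          ((∫ z in y..x, Complex.exp (-2 * I * μ * z) * σ₂ z) *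
           (∫ τ in (0:ℝ)..y, Complex.exp (-2 * I * μ * τ) * σ₂ τ)) * σ₁ y‖ := by
        simp only [hJ, Matrix.transpose_apply, Fin.sum_univ_two, Matrix.cons_val_zero,
          Matrix.cons_val_one, Matrix.head_cons, Matrix.head_fin_const, Matrix.cons_val',
          Matrix.empty_val', Matrix.cons_val_fin_one, mul_zero, zero_mul,
          intervalIntegral.integral_zero, add_zero, zero_add, norm_zero]
        simp [mul_assoc]
    _ ≤ (∫ y in (0:ℝ)..x, Real.exp (2*d) * ((γ₀ x + γ₀ y) * γ₀ y) * ‖σ₂ y‖)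
        + ∫ y in (0:ℝ)..x, Real.exp (2*d) * ((γ₀ x + γ₀ y) * γ₀ y) * ‖σ₁ y‖ :=
        add_le_add bound1 bound2
    _ = ∫ y in (0:ℝ)..x, (Real.exp (2*d) * ((γ₀ x + γ₀ y) * γ₀ y) * ‖σ₂ y‖
        + Real.exp (2*d) * ((γ₀ x + γ₀ y) * γ₀ y) * ‖σ₁ y‖) :=
        (intervalIntegral.integral_add hG1 hG2).symm
    _ = ∫ y in (0:ℝ)..x, (Real.exp (2*d) * (σ₀ y * γ₀ y ^ 2)
        + Real.exp (2*d) * (γ₀ x * (σ₀ y * γ₀ y))) := by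
        apply intervalIntegral.integral_congr
        intro y _
        simp only [hσ₀]
        ring
    _ = Real.exp (2*d) * (∫ y in (0:ℝ)..x, σ₀ y * γ₀ y ^ 2)
        + Real.exp (2*d) * (γ₀ x * ∫ y in (0:ℝ)..x, σ₀ y * γ₀ y) := by
        rw [intervalIntegral.integral_add hA1 hA2, intervalIntegral.integral_const_mul,
          intervalIntegral.integral_const_mul, intervalIntegral.integral_const_mul]
    _ ≤ Real.exp (2*d) * (γ₁ + γ₀ x * ∫ y in (0:ℝ)..x, σ₀ y * γ₀ y) := by
        rw [mul_add]
        have hle : (∫ y in (0:ℝ)..x, σ₀ y * γ₀ y ^ 2) ≤ γ₁ := by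
          rw [hγ₁]
          refine intervalIntegral.integral_mono_interval le_rfl hx0 hx1 ?_ hσγ2
          exact Filter.Eventually.of_forall fun y =>
            mul_nonneg (hσnn y) (pow_nonneg (hγnn y) 2)
        exact add_le_add (mul_le_mul_of_nonneg_left hle (Real.exp_nonneg _)) le_rfl
end
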